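/- With notation as in the optimization problem defining F(z) (concave on [0, Z] with Z = Σ γ_i‖h_i‖²) and R₂(z) = log(1 + a/(z+1)) − log(1 + b/(F(z)+1)) with a, b > 0: if z* maximizes R₂ over [0, Z] and β = R₂(0)/log(1+a) with β > 0, then z* < a/((1+a)^β − 1) − 1 or z* = 0. -/
import Mathlib


/-- If `z*` maximizes `R₂(z) = log(1+a/(z+1)) − log(1+b/(F z+1))` on `[0, Z]` and
`β = R₂(0)/log(1+a) > 0`, then `z* < a/((1+a)^β − 1) − 1` or `z* = 0`. -/
theorem stmt_10 {Z a b : ℝ} (ha : 0 < a) (hb : 0 < b) (hZ : 0 ≤ Z) (F : ℝ → ℝ)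
    (hF : ConcaveOn ℝ (Set.Icc 0 Z) F) (hF0 : ∀ z ∈ Set.Icc (0 : ℝ) Z, 0 ≤ F z)
    (R₂ : ℝ → ℝ)
    (hR₂ : ∀ z, R₂ z = Real.log (1 + a / (z + 1)) - Real.log (1 + b / (F z + 1)))
    (zstar : ℝ) (hzs : zstar ∈ Set.Icc (0 : ℝ) Z)
    (hmax : ∀ z ∈ Set.Icc (0 : ℝ) Z, R₂ z ≤ R₂ zstar)
    (β : ℝ) (hβdef : β = R₂ 0 / Real.log (1 + a)) (hβ : 0 < β) :
    zstar < a / ((1 + a) ^ β - 1) - 1 ∨ zstar = 0 := by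
  left
  obtain ⟨hz0, hzZ⟩ := hzs
  have hz1 : (0:ℝ) < zstar + 1 := by linarith
  have hla : 0 < Real.log (1 + a) := Real.log_pos (by linarith)
  have hR0 : R₂ 0 = β * Real.log (1 + a) := by
    rw [hβdef]; field_simp
  -- eavesdropper term positive at zstar
  have hFz : 0 ≤ F zstar := hF0 zstar ⟨hz0, hzZ⟩
  have hF1 : 0 < F zstar + 1 := by linarith
  have heav : 0 < Real.log (1 + b / (F zstar + 1)) :=
    Real.log_pos (by nlinarith [div_pos hb hF1])
  have hge : R₂ 0 ≤ R₂ zstar := hmax 0 ⟨le_refl 0, hZ⟩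
  have hkey : β * Real.log (1 + a) < Real.log (1 + a / (zstar + 1)) := by
    have := hR₂ zstar
    rw [hR0] at hge
    linarith
  -- exponentiate
  have hpos : 0 < 1 + a / (zstar + 1) := by positivity
  have hexp : (1 + a) ^ β < 1 + a / (zstar + 1) := by
    have h1 : (1 + a) ^ β = Real.exp (β * Real.log (1 + a)) := by
      rw [Real.rpow_def_of_pos (by linarith), mul_comm]
    rw [h1]
    calc Real.exp (β * Real.log (1 + a)) < Real.exp (Real.log (1 + a / (zstar + 1))) :=
          Real.exp_lt_exp.mpr hkey
      _ = 1 + a / (zstar + 1) := Real.exp_log hpos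
  have hc : 0 < (1 + a) ^ β - 1 := by
    have : (1:ℝ) = (1 + a) ^ (0:ℝ) := (Real.rpow_zero _).symm
    have h1 : (1 + a) ^ (0:ℝ) < (1 + a) ^ β :=
      Real.rpow_lt_rpow_left_iff (by linarith : (1:ℝ) < 1 + a) |>.mpr hβ
    rw [Real.rpow_zero] at h1; linarith
  have h2 : ((1 + a) ^ β - 1) * (zstar + 1) < a := by
    have := hexp
    have h3 : (1 + a) ^ β - 1 < a / (zstar + 1) := by linarith
    calc ((1 + a) ^ β - 1) * (zstar + 1) < (a / (zstar + 1)) * (zstar + 1) := by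
          exact mul_lt_mul_of_pos_right h3 hz1
      _ = a := by field_simp
  have h4 : zstar + 1 < a / ((1 + a) ^ β - 1) := by
    rw [lt_div_iff₀ hc]; linarith [mul_comm ((1 + a) ^ β - 1) (zstar + 1)]
  linarith
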